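/- Let σ be the semimetric on the vertex set V of G_d defined by σ(y_s,y_t) = Hamm(s,t), σ(y_s,z_t) = Hamm(s,t) + √d, σ(z_s,z_t) = Hamm(s,t) + 2√d for s ≠ t, and σ(u,u) = 0. Then the nonnegative weight function δ that assigns weight 1 to each of the d axis cuts U_i = {z_s, y_s : s_i = 1} (for i = 1,…,d) and weight √d to each of the k singleton sets {z_s} satisfies σ(u,v) = Σ_U δ(U) Δ_U(u,v) for all u,v ∈ V, and the total cost satisfies Σ_U δ(U) h(U) ≤ 2·k·d (indeed it equals (3/2)·k·d). In particular σ is an ℓ1 semimetric on V. -/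

import Mathlib

open Finset

/-- Vertices of the `d`-dimensional Boolean hypercube. -/
abbrev Cube (d : ℕ) := Fin d → Bool

/-- Hamming distance between two Boolean strings. -/
def hamm {d : ℕ} (s t : Cube d) : ℕ := (Finset.univ.filter fun i => s i ≠ t i).card

/-- The vertex set of the graph `G_d`: `Sum.inl s` is the hypercube vertex `y_s`,
`Sum.inr s` is the terminal `z_s`. -/
abbrev Vtx (d : ℕ) := Cube d ⊕ Cube d

/-- Edge capacities of the graph `G_d`: hypercube edges (Hamming distance `1`) have
capacity `1`, each terminal `z_s` is attached to `y_s` by an edge of capacity `√d`. -/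
noncomputable def gCap (d : ℕ) : Vtx d → Vtx d → ℝ
  | Sum.inl s, Sum.inl t => if hamm s t = 1 then 1 else 0
  | Sum.inl s, Sum.inr t => if s = t then Real.sqrt d else 0
  | Sum.inr s, Sum.inl t => if s = t then Real.sqrt d else 0
  | Sum.inr _, Sum.inr _ => 0

/-- The cut function of a capacitated graph: total capacity of edges crossing `A`.
(Each unordered crossing edge `{u,v}` with `u ∈ A`, `v ∉ A` is counted once.) -/
noncomputable def cutFun {V : Type*} [Fintype V] [DecidableEq V]
    (c : V → V → ℝ) (A : Finset V) : ℝ :=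
  ∑ u ∈ A, ∑ v ∈ Aᶜ, c u v

/-- The terminal set `K = {z_s}` of `G_d`. -/
def Kset (d : ℕ) : Finset (Vtx d) := Finset.univ.image Sum.inr

/-- The terminal cut function: `h_K(U) = min { h(A) : A ∩ K = U }`. -/
noncomputable def termCut {V : Type*} [Fintype V] [DecidableEq V]
    (c : V → V → ℝ) (K U : Finset V) : ℝ :=
  sInf {x : ℝ | ∃ A : Finset V, A ∩ K = U ∧ cutFun c A = x}

/-- The terminal cut function of `G_d`, for a set `A` of terminals (identified with
Boolean strings). -/
noncomputable def hK (d : ℕ) (A : Finset (Cube d)) : ℝ :=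
  termCut (gCap d) (Kset d) (A.image Sum.inr)

/-- The cut (semi)metric `Δ_U` associated with a subset `U`. -/
def cutMetric {V : Type*} [DecidableEq V] (U : Finset V) (u v : V) : ℝ :=
  if (u ∈ U ↔ v ∈ U) then 0 else 1

/-- The semimetric `σ` on the vertices of `G_d`. -/
noncomputable def sigmaMet (d : ℕ) : Vtx d → Vtx d → ℝ
  | Sum.inl s, Sum.inl t => hamm s t
  | Sum.inl s, Sum.inr t => hamm s t + Real.sqrt d
  | Sum.inr s, Sum.inl t => hamm s t + Real.sqrt d
  | Sum.inr s, Sum.inr t => if s = t then 0 else hamm s t + 2 * Real.sqrt d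

/-- The axis cut `U_i = {z_s, y_s : s_i = 1}`. -/
def axisCut (d : ℕ) (i : Fin d) : Finset (Vtx d) :=
  Finset.univ.filter fun u => (Sum.elim (fun s => s i) (fun s => s i) u) = true

/-!
Two vertices are separated by the axis cut `U_i` exactly when their labels differ in
coordinate `i`, and by the singleton `{z_s}` exactly when one of them is `z_s`; summing these
gives `σ`. For the cost, the only edge of `G_d` leaving `{z_s}` is the pendant edge of
capacity `√d`, and the edges leaving `U_i` are the hypercube edges in direction `i`, one for
each `y_s` with `s_i = 1`, so `h(U_i) ≤ k`.
-/

lemma cutMetric_self {V : Type*} [DecidableEq V] (U : Finset V) (u : V) :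
    cutMetric U u u = 0 := by
  simp [cutMetric]

lemma cutMetric_singleton {V : Type*} [DecidableEq V] {u v : V} (huv : u ≠ v) (w : V) :
    cutMetric {w} u v = (if u = w then 1 else 0) + (if v = w then 1 else 0) := by
  by_cases hu : u = w
  · subst hu; simp [cutMetric, Ne.symm huv]
  · by_cases hv : v = w <;> simp [cutMetric, hu, hv]

lemma cutFun_singleton {V : Type*} [Fintype V] [DecidableEq V] (c : V → V → ℝ) (w : V) :
    cutFun c {w} = ∑ v ∈ {w}ᶜ, c w v :=
  sum_singleton _ _

section
variable {d : ℕ}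

lemma hamm_self (s : Cube d) : hamm s s = 0 := by
  simp [hamm]

lemma cast_hamm_eq_sum (s t : Cube d) :
    (hamm s t : ℝ) = ∑ i : Fin d, if s i = t i then 0 else 1 := by
  rw [hamm, card_filter]
  push_cast
  exact sum_congr rfl fun i _ => by by_cases h : s i = t i <;> simp [h]

lemma hamm_update {s : Cube d} {i : Fin d} {b : Bool} (h : s i ≠ b) :
    hamm s (Function.update s i b) = 1 := by
  rw [hamm, card_eq_one]
  refine ⟨i, ?_⟩
  ext j
  by_cases hj : j = i
  · subst hj; simp [h]
  · simp [hj]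

lemma eq_update_of_hamm_eq_one {s t : Cube d} {i : Fin d} (h : hamm s t = 1)
    (hi : s i ≠ t i) : t = Function.update s i (t i) := by
  obtain ⟨j, hj⟩ := card_eq_one.1 h
  have hdiff : ∀ k, s k ≠ t k → k = j := fun k hk => by
    have hk' : k ∈ univ.filter fun i => s i ≠ t i := by simpa using hk
    simpa [hj] using hk'
  funext k
  by_cases hk : k = i
  · subst hk; simp
  · rw [Function.update_of_ne hk]
    by_contra hne
    exact hk ((hdiff k (Ne.symm hne)).trans (hdiff i hi).symm)

def vtxLabel : Vtx d → Cube d := Sum.elim id id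

lemma mem_axisCut {i : Fin d} {u : Vtx d} : u ∈ axisCut d i ↔ vtxLabel u i = true := by
  cases u <;> simp [axisCut, vtxLabel]

lemma cutMetric_axisCut (i : Fin d) (u v : Vtx d) :
    cutMetric (axisCut d i) u v = if vtxLabel u i = vtxLabel v i then 0 else 1 := by
  simp only [cutMetric, mem_axisCut]
  cases vtxLabel u i <;> cases vtxLabel v i <;> simp

lemma sum_cutMetric_axisCut (u v : Vtx d) :
    ∑ i, cutMetric (axisCut d i) u v = hamm (vtxLabel u) (vtxLabel v) := by
  simp only [cutMetric_axisCut, cast_hamm_eq_sum]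

lemma sum_cutMetric_terminal {u v : Vtx d} (huv : u ≠ v) :
    ∑ s : Cube d, cutMetric ({Sum.inr s} : Finset (Vtx d)) u v =
      (if u.isRight then 1 else 0) + (if v.isRight then 1 else 0) := by
  simp only [cutMetric_singleton huv, sum_add_distrib]
  cases u <;> cases v <;> simp

theorem sigmaMet_eq_sum_cutMetric (u v : Vtx d) :
    sigmaMet d u v =
      (∑ i : Fin d, cutMetric (axisCut d i) u v) +
        ∑ s : Cube d, Real.sqrt d * cutMetric ({Sum.inr s} : Finset (Vtx d)) u v := by
  by_cases huv : u = v
  · subst huv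
    cases u <;> simp [sigmaMet, cutMetric_self, hamm_self]
  rw [← mul_sum, sum_cutMetric_axisCut, sum_cutMetric_terminal huv]
  rcases u with s | s <;> rcases v with t | t <;> simp_all [sigmaMet, vtxLabel]
  ring

lemma gCap_inr (s : Cube d) (v : Vtx d) :
    gCap d (Sum.inr s) v = if v = Sum.inl s then Real.sqrt d else 0 := by
  rcases v with t | t
  · by_cases h : s = t
    · subst h; simp [gCap]
    · simp [gCap, h, Ne.symm h]
  · simp [gCap]

lemma cutFun_gCap_terminal (s : Cube d) :
    cutFun (gCap d) {Sum.inr s} = Real.sqrt d := by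
  simp [cutFun_singleton, gCap_inr]

lemma sum_gCap_compl_axisCut {i : Fin d} {u : Vtx d} (hu : u ∈ axisCut d i) :
    ∑ v ∈ (axisCut d i)ᶜ, gCap d u v = if u.isLeft then 1 else 0 := by
  rw [mem_axisCut] at hu
  rcases u with s | s
  · simp only [vtxLabel, Sum.elim_inl, id] at hu
    rw [sum_eq_single_of_mem (Sum.inl (Function.update s i false))
      (by simp [mem_axisCut, vtxLabel])]
    · simp [gCap, hamm_update (by simp [hu] : s i ≠ false)]
    rintro (t | t) ht hne
    · simp only [mem_compl, mem_axisCut, vtxLabel, Sum.elim_inl, id_eq, Bool.not_eq_true] at ht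
      refine if_neg fun h => hne (congrArg Sum.inl ?_)
      rw [eq_update_of_hamm_eq_one (i := i) h (by simp [hu, ht]), ht]
    · simp only [mem_compl, mem_axisCut, vtxLabel, Sum.elim_inr, id_eq, Bool.not_eq_true] at ht
      exact if_neg fun h => by simp [h, ht] at hu
  · simp only [gCap_inr, Sum.isLeft_inr]
    refine sum_eq_zero fun v hv => if_neg ?_
    rintro rfl
    simp_all [mem_axisCut, vtxLabel]

lemma cutFun_gCap_axisCut (i : Fin d) :
    cutFun (gCap d) (axisCut d i) = #{s : Cube d | s i = true} := by
  rw [cutFun, sum_congr rfl fun u hu => sum_gCap_compl_axisCut hu, axisCut, sum_filter,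
    Fintype.sum_sum_type]
  simp

theorem cutDecomposition_cost_le :
    (∑ i : Fin d, cutFun (gCap d) (axisCut d i)) +
        ∑ s : Cube d, Real.sqrt d * cutFun (gCap d) ({Sum.inr s} : Finset (Vtx d))
      ≤ 2 * 2 ^ d * d := by
  have haxis (i : Fin d) : cutFun (gCap d) (axisCut d i) ≤ 2 ^ d := by
    rw [cutFun_gCap_axisCut]
    exact_mod_cast (card_filter_le _ _).trans_eq (by simp)
  calc _ ≤ ∑ _i : Fin d, (2 : ℝ) ^ d + ∑ _s : Cube d, Real.sqrt d * Real.sqrt d := by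
          simp only [cutFun_gCap_terminal]
          gcongr with i
          exact haxis i
    _ = 2 * 2 ^ d * d := by
          simp [Real.mul_self_sqrt]
          ring

end

theorem sigma_cut_decomposition_general (d : ℕ) :
    (∀ u v : Vtx d,
      sigmaMet d u v =
        (∑ i : Fin d, cutMetric (axisCut d i) u v) +
          ∑ s : Cube d, Real.sqrt d * cutMetric ({Sum.inr s} : Finset (Vtx d)) u v) ∧
    (∑ i : Fin d, cutFun (gCap d) (axisCut d i)) +
        (∑ s : Cube d, Real.sqrt d * cutFun (gCap d) ({Sum.inr s} : Finset (Vtx d)))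
      ≤ 2 * 2 ^ d * d :=
  ⟨sigmaMet_eq_sum_cutMetric, cutDecomposition_cost_le⟩

/-- The weight function assigning weight `1` to each of the `d` axis
cuts and weight `√d` to each singleton `{z_s}` decomposes `σ` as a weighted sum of cut
metrics, and its total cost `Σ_U δ(U) h(U)` is at most `2 · k · d`.  In particular `σ`
is an `ℓ₁` semimetric on `V`. -/
theorem sigma_cut_decomposition (d : ℕ) (hd : 1 ≤ d) :
    (∀ u v : Vtx d,
      sigmaMet d u v =
        (∑ i : Fin d, cutMetric (axisCut d i) u v) +
          ∑ s : Cube d, Real.sqrt d * cutMetric ({Sum.inr s} : Finset (Vtx d)) u v) ∧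
    (∑ i : Fin d, cutFun (gCap d) (axisCut d i)) +
        (∑ s : Cube d, Real.sqrt d * cutFun (gCap d) ({Sum.inr s} : Finset (Vtx d)))
      ≤ 2 * 2 ^ d * d :=
  sigma_cut_decomposition_general d
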